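/- arXiv:2105.04862 — 6 statements merged into one kernel-verified Lean document; each statement's English description precedes it below -/
import Mathlib

section
/- Let (X, ‖·|) be an asymmetric normed space whose index of symmetry is zero, i.e. for every ε > 0 there exists x ∈ X with ‖x| = 1 and ‖-x| < ε. Then X, equipped with the topology induced by the asymmetric norm, is not a Baire space. -/
/-!
The sets `Gₙ = {x | n < ‖-x|}` are open, because `x ↦ ‖-x|` is lower semicontinuous for the
asymmetric topology. They are also dense: near any `x`, the point `x - t • u` with `‖u| = 1` and
`‖-u|` tiny lies in a small ball around `x`, yet `‖t • u - x| ≥ t - ‖x|` is as large as we like.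
Their intersection is empty, so the space is not Baire.
-/

open Topology

theorem not_baireSpace_of_lowerSemicontinuous {X : Type*} [TopologicalSpace X] [Nonempty X]
    {f : X → ℝ} (hf : LowerSemicontinuous f) (hdense : ∀ c : ℝ, Dense {x | c < f x}) :
    ¬ BaireSpace X := by
  intro _
  have hG : Dense (⋂ n : ℕ, {x | (n : ℝ) < f x}) :=
    dense_iInter_of_isOpen (fun n => hf.isOpen_preimage n) (fun n => hdense n)
  obtain ⟨z, hz⟩ := hG.nonempty
  obtain ⟨n, hn⟩ := exists_nat_ge (f z)
  exact (Set.mem_iInter.1 hz n).not_ge hn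

namespace AsymmetricNorm

variable {X : Type*} [AddCommGroup X] (p : X → ℝ)

def ball (x : X) (r : ℝ) : Set X := {y | p (y - x) < r}

abbrev topology : TopologicalSpace X :=
  TopologicalSpace.generateFrom {s | ∃ x r, 0 < r ∧ s = ball p x r}

variable {p}

theorem mem_ball_self [Module ℝ X] (hph : ∀ c : ℝ, 0 ≤ c → ∀ x, p (c • x) = c * p x)
    (x : X) {r : ℝ} (hr : 0 < r) : x ∈ ball p x r := by
  have hp0 : p 0 = 0 := by simpa using hph 0 le_rfl 0
  simpa [ball, hp0] using hr

theorem ball_mono {x : X} {r s : ℝ} (h : r ≤ s) : ball p x r ⊆ ball p x s :=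
  fun _ hy => lt_of_lt_of_le hy h

theorem ball_subset_ball (hpt : ∀ x y, p (x + y) ≤ p x + p y) (x y : X) (r : ℝ) :
    ball p y (r - p (y - x)) ⊆ ball p x r := by
  intro z hz
  have h := hpt (z - y) (y - x)
  rw [sub_add_sub_cancel] at h
  simp only [ball, Set.mem_ofPred_eq] at hz ⊢
  linarith

theorem exists_ball_subset_of_isOpen (hpt : ∀ x y, p (x + y) ≤ p x + p y) {U : Set X}
    (hU : IsOpen[topology p] U) : ∀ x ∈ U, ∃ r > 0, ball p x r ⊆ U := by
  induction hU with
  | basic s hs =>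
    obtain ⟨c, r, -, rfl⟩ := hs
    intro x hx
    exact ⟨r - p (x - c), sub_pos.2 hx, ball_subset_ball hpt c x r⟩
  | univ => exact fun _ _ => ⟨1, one_pos, Set.subset_univ _⟩
  | inter s t _ _ hs ht =>
    intro x hx
    obtain ⟨r₁, hr₁, h₁⟩ := hs x hx.1
    obtain ⟨r₂, hr₂, h₂⟩ := ht x hx.2
    exact ⟨min r₁ r₂, lt_min hr₁ hr₂, Set.subset_inter ((ball_mono (min_le_left _ _)).trans h₁)
      ((ball_mono (min_le_right _ _)).trans h₂)⟩
  | sUnion S _ hS =>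
    rintro x ⟨s, hs, hxs⟩
    obtain ⟨r, hr, h⟩ := hS s hs x hxs
    exact ⟨r, hr, h.trans (Set.subset_sUnion_of_mem hs)⟩

theorem isOpen_ball (x : X) {r : ℝ} (hr : 0 < r) : IsOpen[topology p] (ball p x r) :=
  TopologicalSpace.GenerateOpen.basic _ ⟨x, r, hr, rfl⟩

theorem ball_mem_nhds [Module ℝ X] (hph : ∀ c : ℝ, 0 ≤ c → ∀ x, p (c • x) = c * p x)
    (x : X) {r : ℝ} (hr : 0 < r) : ball p x r ∈ @nhds X (topology p) x :=
  @IsOpen.mem_nhds X (topology p) _ _ (isOpen_ball x hr) (mem_ball_self hph x hr)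

theorem lowerSemicontinuous_neg [Module ℝ X]
    (hph : ∀ c : ℝ, 0 ≤ c → ∀ x, p (c • x) = c * p x) (hpt : ∀ x y, p (x + y) ≤ p x + p y) :
    @LowerSemicontinuous X ℝ (topology p) _ fun x => p (-x) := by
  intro x c hc
  filter_upwards [ball_mem_nhds hph x (sub_pos.2 hc)] with y hy
  have h := hpt (-y) (y - x)
  rw [show -y + (y - x) = -x by abel] at h
  simp only [ball, Set.mem_ofPred_eq] at hy
  linarith

theorem exists_mem_ball_lt_neg [Module ℝ X] (hp0 : ∀ x, 0 ≤ p x)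
    (hph : ∀ c : ℝ, 0 ≤ c → ∀ x, p (c • x) = c * p x) (hpt : ∀ x y, p (x + y) ≤ p x + p y)
    (hsym : ∀ ε : ℝ, 0 < ε → ∃ x : X, p x = 1 ∧ p (-x) < ε)
    (x : X) {r : ℝ} (hr : 0 < r) (c : ℝ) : ∃ y ∈ ball p x r, c < p (-y) := by
  set t := |c| + p x + 1
  have ht : 0 < t := by positivity [hp0 x]
  obtain ⟨u, hu, hu'⟩ := hsym (r / t) (div_pos hr ht)
  refine ⟨x - t • u, ?_, ?_⟩
  · calc p (x - t • u - x) = t * p (-u) := by rw [sub_sub_cancel_left, ← smul_neg, hph t ht.le]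
      _ < t * (r / t) := mul_lt_mul_of_pos_left hu' ht
      _ = r := mul_div_cancel₀ r ht.ne'
  · have h := hpt (t • u - x) x
    rw [sub_add_cancel, hph t ht.le, hu, mul_one] at h
    rw [neg_sub]
    linarith [le_abs_self c]

theorem dense_setOf_lt_neg [Module ℝ X] (hp0 : ∀ x, 0 ≤ p x)
    (hph : ∀ c : ℝ, 0 ≤ c → ∀ x, p (c • x) = c * p x) (hpt : ∀ x y, p (x + y) ≤ p x + p y)
    (hsym : ∀ ε : ℝ, 0 < ε → ∃ x : X, p x = 1 ∧ p (-x) < ε) (c : ℝ) :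
    @Dense X (topology p) {x | c < p (-x)} := by
  let := topology p
  refine dense_iff_inter_open.2 fun U hU ⟨x, hx⟩ => ?_
  obtain ⟨r, hr, hball⟩ := exists_ball_subset_of_isOpen hpt hU x hx
  obtain ⟨y, hy, hcy⟩ := exists_mem_ball_lt_neg hp0 hph hpt hsym x hr c
  exact ⟨y, hball hy, hcy⟩

end AsymmetricNorm

open AsymmetricNorm in
theorem stmt_4_general {X : Type*} [AddCommGroup X] [Module ℝ X] (p : X → ℝ)
    (hp0 : ∀ x, 0 ≤ p x)
    (hph : ∀ c : ℝ, 0 ≤ c → ∀ x, p (c • x) = c * p x)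
    (hpt : ∀ x y, p (x + y) ≤ p x + p y)
    (hsym : ∀ ε : ℝ, 0 < ε → ∃ x : X, p x = 1 ∧ p (-x) < ε) :
    ¬ @BaireSpace X (TopologicalSpace.generateFrom
        {s : Set X | ∃ x : X, ∃ r : ℝ, 0 < r ∧ s = {y : X | p (y - x) < r}}) :=
  @not_baireSpace_of_lowerSemicontinuous X (topology p) _ _ (lowerSemicontinuous_neg hph hpt)
    (dense_setOf_lt_neg hp0 hph hpt hsym)

/-- An asymmetric normed space whose index of symmetry is zero
(for every `ε > 0` there is `x` with `‖x| = 1` and `‖-x| < ε`), equipped with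
the topology induced by the asymmetric norm, is not a Baire space. -/
theorem stmt_4 {X : Type*} [AddCommGroup X] [Module ℝ X] (p : X → ℝ)
    (hp0 : ∀ x, 0 ≤ p x)
    (hph : ∀ c : ℝ, 0 ≤ c → ∀ x, p (c • x) = c * p x)
    (hpt : ∀ x y, p (x + y) ≤ p x + p y)
    (hps : ∀ x, (p x = 0 ∧ p (-x) = 0) ↔ x = 0)
    (hsym : ∀ ε : ℝ, 0 < ε → ∃ x : X, p x = 1 ∧ p (-x) < ε) :
    ¬ @BaireSpace X (TopologicalSpace.generateFrom
        {s : Set X | ∃ x : X, ∃ r : ℝ, 0 < r ∧ s = {y : X | p (y - x) < r}}) :=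
  stmt_4_general p hp0 hph hpt hsym
end

section
/- Let (X, ‖·|) be an asymmetric normed space and suppose there exists a linear functional p : X → ℝ such that p is bounded for the asymmetric norm (there exists C ≥ 0 with p(x) ≤ C‖x| for all x ∈ X) while -p is not bounded (for every C ≥ 0 there exists x ∈ X with -p(x) > C‖x|). Then X, equipped with the topology induced by the asymmetric norm, is not a Baire space. -/
/-!
Since `f ≤ C ‖·|`, the functional `f` is upper semicontinuous for the asymmetric topology, so every
sublevel set `{f < c}` is open. Since `-f` is unbounded, rescaling yields vectors of arbitrarily
small asymmetric norm on which `f` takes any prescribed negative value, so every `{f < c}` is also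
dense. In a Baire space the sets `{f < -n}` would then have a common point, which is absurd.
-/

open TopologicalSpace

section AsymmetricNorm

variable {X : Type*}

def asymBalls [AddGroup X] (p : X → ℝ) : Set (Set X) :=
  {s | ∃ x : X, ∃ r : ℝ, 0 < r ∧ s = {y : X | p (y - x) < r}}

theorem isTopologicalBasis_asymBalls [AddGroup X] {p : X → ℝ} (hp_zero : p 0 = 0)
    (hp_add : ∀ x y, p (x + y) ≤ p x + p y) :
    @IsTopologicalBasis X (generateFrom (asymBalls p)) (asymBalls p) := by
  refine @IsTopologicalBasis.mk X (generateFrom _) _ ?_ ?_ rfl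
  · rintro _ ⟨x₁, r₁, -, rfl⟩ _ ⟨x₂, r₂, -, rfl⟩ x ⟨hx₁, hx₂⟩
    have hx₁' : 0 < r₁ - p (x - x₁) := sub_pos.2 hx₁
    have hx₂' : 0 < r₂ - p (x - x₂) := sub_pos.2 hx₂
    refine ⟨{y | p (y - x) < min (r₁ - p (x - x₁)) (r₂ - p (x - x₂))},
      ⟨x, _, lt_min hx₁' hx₂', rfl⟩, by simpa [hp_zero] using lt_min hx₁' hx₂', ?_⟩
    intro y hy
    simp only [Set.mem_ofPred_eq, lt_min_iff] at hy
    have h₁ := hp_add (y - x) (x - x₁)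
    have h₂ := hp_add (y - x) (x - x₂)
    rw [sub_add_sub_cancel] at h₁ h₂
    show p (y - x₁) < r₁ ∧ p (y - x₂) < r₂
    exact ⟨by linarith, by linarith⟩
  · refine Set.eq_univ_of_forall fun x => ⟨_, ⟨x, 1, one_pos, rfl⟩, ?_⟩
    simp [hp_zero]

theorem isOpen_setOf_apply_lt_of_le_mul [AddGroup X] [TopologicalSpace X] {p : X → ℝ}
    (hB : IsTopologicalBasis (asymBalls p)) (hp_nonneg : ∀ x, 0 ≤ p x) (hp_zero : p 0 = 0)
    {f : X →+ ℝ} {C : ℝ} (hC : 0 ≤ C) (hf : ∀ x, f x ≤ C * p x) (c : ℝ) :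
    IsOpen {x | f x < c} := by
  rw [hB.isOpen_iff]
  intro a (ha : f a < c)
  have hρ : 0 < (c - f a) / (C + 1) := div_pos (sub_pos.2 ha) (by linarith)
  refine ⟨_, ⟨a, _, hρ, rfl⟩, by simpa [hp_zero] using hρ, fun y (hy : p (y - a) < _) => ?_⟩
  rw [lt_div_iff₀ (by linarith)] at hy
  have hfy : f y = f a + f (y - a) := by rw [map_sub, add_sub_cancel]
  show f y < c
  linarith [hf (y - a), hp_nonneg (y - a)]

variable [AddCommGroup X] [Module ℝ X] {p : X → ℝ}

theorem exists_lt_apply_eq_neg_of_not_bounded (hp_nonneg : ∀ x, 0 ≤ p x)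
    (hp_smul : ∀ c : ℝ, 0 ≤ c → ∀ x, p (c • x) = c * p x) {f : X →ₗ[ℝ] ℝ}
    (hf : ∀ C : ℝ, 0 ≤ C → ∃ x, C * p x < -f x) {r M : ℝ} (hr : 0 < r) (hM : 0 ≤ M) :
    ∃ z, p z < r ∧ f z = -M := by
  obtain ⟨z, hz⟩ := hf (M / r) (by positivity)
  have hfz : 0 < -f z := lt_of_le_of_lt (mul_nonneg (by positivity) (hp_nonneg z)) hz
  refine ⟨(M / -f z) • z, ?_, ?_⟩
  · rw [hp_smul _ (by positivity), div_mul_eq_mul_div, div_lt_iff₀ hfz]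
    rw [div_mul_eq_mul_div, div_lt_iff₀ hr] at hz
    linarith
  · rw [map_smul, smul_eq_mul, div_mul_eq_mul_div, div_eq_iff hfz.ne']
    ring

theorem dense_setOf_apply_lt_of_not_bounded [TopologicalSpace X] (hB : IsTopologicalBasis (asymBalls p))
    (hp_nonneg : ∀ x, 0 ≤ p x) (hp_smul : ∀ c : ℝ, 0 ≤ c → ∀ x, p (c • x) = c * p x)
    {f : X →ₗ[ℝ] ℝ} (hf : ∀ C : ℝ, 0 ≤ C → ∃ x, C * p x < -f x) (c : ℝ) :
    Dense {x | f x < c} := by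
  rw [hB.dense_iff]
  rintro _ ⟨x₀, r, hr, rfl⟩ -
  obtain ⟨z, hz, hfz⟩ :=
    exists_lt_apply_eq_neg_of_not_bounded hp_nonneg hp_smul hf hr (M := |f x₀ - c| + 1) (by positivity)
  refine ⟨x₀ + z, by simpa using hz, ?_⟩
  simp only [Set.mem_ofPred_eq, map_add, hfz]
  linarith [le_abs_self (f x₀ - c)]

end AsymmetricNorm

theorem not_baireSpace_of_forall_isOpen_dense {X : Type*} [TopologicalSpace X] [Nonempty X]
    (g : X → ℝ) (hopen : ∀ c, IsOpen {x | g x < c}) (hdense : ∀ c, Dense {x | g x < c}) :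
    ¬ BaireSpace X := by
  intro
  obtain ⟨x, hx⟩ :=
    (dense_iInter_of_isOpen (fun n : ℕ => hopen (-n)) fun n => hdense (-n)).nonempty
  obtain ⟨n, hn⟩ := exists_nat_gt (-g x)
  have hxn : g x < -n := Set.mem_iInter.1 hx n
  linarith

theorem stmt_7_general {X : Type*} [AddCommGroup X] [Module ℝ X] (p : X → ℝ)
    (hp0 : ∀ x, 0 ≤ p x)
    (hph : ∀ c : ℝ, 0 ≤ c → ∀ x, p (c • x) = c * p x)
    (hpt : ∀ x y, p (x + y) ≤ p x + p y)
    (f : X →ₗ[ℝ] ℝ)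
    (hfb : ∃ C : ℝ, 0 ≤ C ∧ ∀ x, f x ≤ C * p x)
    (hfnb : ∀ C : ℝ, 0 ≤ C → ∃ x, C * p x < -f x) :
    ¬ @BaireSpace X (TopologicalSpace.generateFrom
        {s : Set X | ∃ x : X, ∃ r : ℝ, 0 < r ∧ s = {y : X | p (y - x) < r}}) := by
  let _ : TopologicalSpace X := generateFrom (asymBalls p)
  have hp_zero : p 0 = 0 := by simpa using hph 0 le_rfl 0
  have hB : IsTopologicalBasis (asymBalls p) := isTopologicalBasis_asymBalls hp_zero hpt
  obtain ⟨C, hC, hfC⟩ := hfb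
  exact not_baireSpace_of_forall_isOpen_dense f
    (isOpen_setOf_apply_lt_of_le_mul hB hp0 hp_zero (f := f.toAddMonoidHom) hC hfC)
    (dense_setOf_apply_lt_of_not_bounded hB hp0 hph hfnb)

/-- Let `(X, ‖·|)` be an asymmetric normed space admitting a linear
functional `f` that is bounded for the asymmetric norm while `-f` is not bounded.
Then `X` with the topology induced by the asymmetric norm is not a Baire space. -/
theorem stmt_7 {X : Type*} [AddCommGroup X] [Module ℝ X] (p : X → ℝ)
    (hp0 : ∀ x, 0 ≤ p x)
    (hph : ∀ c : ℝ, 0 ≤ c → ∀ x, p (c • x) = c * p x)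
    (hpt : ∀ x y, p (x + y) ≤ p x + p y)
    (hps : ∀ x, (p x = 0 ∧ p (-x) = 0) ↔ x = 0)
    (f : X →ₗ[ℝ] ℝ)
    (hfb : ∃ C : ℝ, 0 ≤ C ∧ ∀ x, f x ≤ C * p x)
    (hfnb : ∀ C : ℝ, 0 ≤ C → ∃ x, C * p x < -f x) :
    ¬ @BaireSpace X (TopologicalSpace.generateFrom
        {s : Set X | ∃ x : X, ∃ r : ℝ, 0 < r ∧ s = {y : X | p (y - x) < r}}) :=
  stmt_7_general p hp0 hph hpt f hfb hfnb
end

section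
/- Let (X, d) be a quasi-hemi-metric space with index of symmetry c(X) > 0 such that the symmetrized metric space (X, d_s) is complete. Then the topology on X induced by d (generated by the balls B(x,r) = { y : d(x,y) < r }) coincides with the topology of the metric d_s, and in particular X with this topology is a Baire space. -/
/-!
The index of symmetry `c > 0` gives `c * d y x ≤ d x y`, so a forward ball of radius
`min c 1 * r` lies inside the symmetric ball of radius `r`, while every symmetric ball
lies inside the forward ball of the same radius. Hence the two families of balls
generate the same topology, which is that of the complete metric `d_s`; complete
pseudometric spaces are Baire.
-/

namespace QuasiHemiMetric

open Topology

variable {X : Type*}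

abbrev ballTopology (ρ : X → X → ℝ) : TopologicalSpace X :=
  TopologicalSpace.generateFrom {s | ∃ x r, 0 < r ∧ s = {y | ρ x y < r}}

theorem isOpen_ballTopology_of_forall_ball_subset {ρ : X → X → ℝ} (hρ : ∀ x, ρ x x = 0)
    {U : Set X} (hU : ∀ y ∈ U, ∃ r > 0, {z | ρ y z < r} ⊆ U) :
    IsOpen[ballTopology ρ] U := by
  refine (@isOpen_iff_forall_mem_open X (ballTopology ρ) U).2 fun y hy => ?_
  obtain ⟨r, hr, hsub⟩ := hU y hy
  exact ⟨_, hsub, .basic _ ⟨y, r, hr, rfl⟩, show ρ y y < r by rwa [hρ]⟩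

theorem ballTopology_le_of_forall_ball_subset {ρ σ : X → X → ℝ}
    (hρ : ∀ x y z, ρ x y ≤ ρ x z + ρ z y) (hσ : ∀ x, σ x x = 0)
    (h : ∀ x r, 0 < r → ∃ r' > 0, {y | σ x y < r'} ⊆ {y | ρ x y < r}) :
    ballTopology σ ≤ ballTopology ρ := by
  refine le_generateFrom ?_
  rintro _ ⟨x, r, -, rfl⟩
  refine isOpen_ballTopology_of_forall_ball_subset hσ fun y (hy : ρ x y < r) => ?_
  obtain ⟨r', hr', hsub⟩ := h y (r - ρ x y) (by linarith)
  exact ⟨r', hr', hsub.trans fun z (hz : ρ y z < r - ρ x y) =>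
    show ρ x z < r by linarith [hρ x z y]⟩

theorem ballTopology_dist_eq (α : Type*) [PseudoMetricSpace α] :
    ballTopology (dist : α → α → ℝ) = UniformSpace.toTopologicalSpace := by
  have hball : ∀ (x : α) r, {y | dist x y < r} = Metric.ball x r := fun x r => by
    ext y
    rw [Metric.mem_ball, dist_comm, Set.mem_ofPred_eq]
  refine le_antisymm ?_ (le_generateFrom ?_)
  · intro U hU
    refine isOpen_ballTopology_of_forall_ball_subset dist_self fun y hy => ?_
    simpa only [hball] using Metric.isOpen_iff.1 hU y hy
  · rintro _ ⟨x, r, -, rfl⟩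
    exact hball x r ▸ Metric.isOpen_ball

def symmetrize (d : X → X → ℝ) (x y : X) : ℝ :=
  max (d x y) (d y x)

theorem symmetrize_triangle {d : X → X → ℝ} (htri : ∀ x y z, d x y ≤ d x z + d z y)
    (x y z : X) : symmetrize d x y ≤ symmetrize d x z + symmetrize d z y := by
  unfold symmetrize
  refine max_le ?_ ?_
  · linarith [htri x y z, le_max_left (d x z) (d z x), le_max_left (d z y) (d y z)]
  · linarith [htri y x z, le_max_right (d x z) (d z x), le_max_right (d z y) (d y z)]

abbrev symmetrizedPseudoMetricSpace (d : X → X → ℝ) (hdd : ∀ x, d x x = 0)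
    (htri : ∀ x y z, d x y ≤ d x z + d z y) : PseudoMetricSpace X where
  dist := symmetrize d
  dist_self x := by simp [symmetrize, hdd]
  dist_comm _ _ := max_comm _ _
  dist_triangle x y z := symmetrize_triangle htri x z y

theorem ballTopology_eq_ballTopology_symmetrize {d : X → X → ℝ} (hdd : ∀ x, d x x = 0)
    (htri : ∀ x y z, d x y ≤ d x z + d z y) {c : ℝ} (hc : 0 < c)
    (hcd : ∀ x y, c * d y x ≤ d x y) :
    ballTopology d = ballTopology (symmetrize d) := by
  have hsym : ∀ x, symmetrize d x x = 0 := fun x => by simp [symmetrize, hdd]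
  refine le_antisymm ?_ (ballTopology_le_of_forall_ball_subset htri hsym fun x r hr =>
    ⟨r, hr, fun y (hy : max (d x y) (d y x) < r) => (le_max_left _ _).trans_lt hy⟩)
  refine ballTopology_le_of_forall_ball_subset (symmetrize_triangle htri) hdd fun x r hr =>
    ⟨min c 1 * r, by positivity, fun y (hy : d x y < min c 1 * r) => ?_⟩
  have hcr : min c 1 * r ≤ c * r := by gcongr; exact min_le_left _ _
  have hr1 : min c 1 * r ≤ r := mul_le_of_le_one_left hr.le (min_le_right _ _)
  refine max_lt (hy.trans_le hr1) (lt_of_mul_lt_mul_left ?_ hc.le)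
  linarith [hcd x y]

noncomputable def indexOfSymmetry (d : X → X → ℝ) : ℝ :=
  sInf {r | ∃ x y, 0 < d y x ∧ r = d x y / d y x}

theorem indexOfSymmetry_mul_le {d : X → X → ℝ} (hd0 : ∀ x y, 0 ≤ d x y) (x y : X) :
    indexOfSymmetry d * d y x ≤ d x y := by
  rcases (hd0 y x).eq_or_lt with h | h
  · simp [← h, hd0 x y]
  · have hbdd : BddBelow {r | ∃ x y, 0 < d y x ∧ r = d x y / d y x} :=
      ⟨0, fun _ ⟨a, b, hb, hr⟩ => hr ▸ div_nonneg (hd0 a b) hb.le⟩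
    exact (le_div_iff₀ h).1 (csInf_le hbdd ⟨x, y, h, rfl⟩)

end QuasiHemiMetric

open QuasiHemiMetric in
/-- Let `(X, d)` be a quasi-hemi-metric space with index of symmetry
`c(X) > 0` whose symmetrized metric `d_s(x,y) = max (d x y) (d y x)` is complete
(every `d_s`-Cauchy sequence converges). Then the topology induced by `d`
coincides with the topology of the metric `d_s`, and in particular `X` with the
topology induced by `d` is a Baire space. -/
theorem stmt_9 {X : Type*} (d : X → X → ℝ)
    (hd0 : ∀ x y, 0 ≤ d x y)
    (htri : ∀ x y z, d x y ≤ d x z + d z y)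
    (hsep : ∀ x y, (d x y = 0 ∧ d y x = 0) ↔ x = y)
    (hc : 0 < sInf {r : ℝ | ∃ x y : X, 0 < d y x ∧ r = d x y / d y x})
    (hcomp : ∀ u : ℕ → X,
      (∀ ε : ℝ, 0 < ε → ∃ N : ℕ, ∀ m ≥ N, ∀ n ≥ N,
        max (d (u m) (u n)) (d (u n) (u m)) < ε) →
      ∃ x : X, ∀ ε : ℝ, 0 < ε → ∃ N : ℕ, ∀ n ≥ N,
        max (d x (u n)) (d (u n) x) < ε) :
    (TopologicalSpace.generateFrom
        {s : Set X | ∃ x : X, ∃ r : ℝ, 0 < r ∧ s = {y : X | d x y < r}}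
      = TopologicalSpace.generateFrom
        {s : Set X | ∃ x : X, ∃ r : ℝ, 0 < r ∧
          s = {y : X | max (d x y) (d y x) < r}}) ∧
    @BaireSpace X (TopologicalSpace.generateFrom
        {s : Set X | ∃ x : X, ∃ r : ℝ, 0 < r ∧ s = {y : X | d x y < r}}) := by
  have hdd : ∀ x, d x x = 0 := fun x => ((hsep x x).2 rfl).1
  have heq : ballTopology d = ballTopology (symmetrize d) :=
    ballTopology_eq_ballTopology_symmetrize hdd htri hc (indexOfSymmetry_mul_le hd0)
  refine ⟨heq, show @BaireSpace X (ballTopology d) from ?_⟩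
  let := symmetrizedPseudoMetricSpace d hdd htri
  have : CompleteSpace X := Metric.complete_of_cauchySeq_tendsto fun u hu => by
    obtain ⟨x, hx⟩ := hcomp u (Metric.cauchySeq_iff.1 hu)
    refine ⟨x, Metric.tendsto_atTop.2 fun ε hε => ?_⟩
    obtain ⟨N, hN⟩ := hx ε hε
    exact ⟨N, fun n hn => (max_comm (d (u n) x) _).trans_lt (hN n hn)⟩
  rw [heq, show ballTopology (symmetrize d) = ballTopology dist from rfl,
    ballTopology_dist_eq]
  infer_instance
end

section
/- On the space ℓ^∞ of bounded real sequences indexed by the positive integers, define ‖x|_∞ := sup_{n ≥ 1} ‖x_n|_{1/n}, where ‖t|_{1/n} = t if t ≥ 0 and ‖t|_{1/n} = -t/n if t ≤ 0 (i.e. ‖t|_{1/n} = max(t, -t/n)). Then ‖·|_∞ is an asymmetric norm on ℓ^∞ with ‖x|_∞ ≤ ‖x‖_∞ for all x, and its index of symmetry is zero: for each n ≥ 1 the canonical unit vector e_n satisfies ‖e_n|_∞ = 1 and ‖-e_n|_∞ = 1/n, hence c(ℓ^∞, ‖·|_∞) = 0. -/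
/-!
Each coordinate functional `t ↦ max t (-t / w)` with `w ≥ 1` is an asymmetric norm on `ℝ`
dominated by `|t|`, and all the axioms survive taking a (bounded) supremum over the coordinates.
On `e n` the supremum sees a single coordinate, so `‖e n| = 1` while `‖-e n| = 1 / n → 0`;
since the asymmetric norm is nonnegative, the index of symmetry is `0`.
-/

open Filter Topology

namespace AsymmetricLinfty

/-- The asymmetric norm `‖t|_{1/w}` on `ℝ`. -/
noncomputable def asymAbs (w t : ℝ) : ℝ := max t (-t / w)

section asymAbs

variable {c w s t : ℝ}

lemma asymAbs_nonneg (hw : 0 ≤ w) : 0 ≤ asymAbs w t := by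
  rcases le_total 0 t with ht | ht
  · exact le_max_of_le_left ht
  · exact le_max_of_le_right (div_nonneg (neg_nonneg.mpr ht) hw)

lemma asymAbs_mul (hc : 0 ≤ c) : asymAbs w (c * t) = c * asymAbs w t := by
  rw [asymAbs, asymAbs, mul_max_of_nonneg _ _ hc, ← mul_neg, mul_div_assoc]

lemma asymAbs_add_le : asymAbs w (s + t) ≤ asymAbs w s + asymAbs w t := by
  refine max_le (add_le_add (le_max_left _ _) (le_max_left _ _)) ?_
  rw [neg_add, add_div]
  exact add_le_add (le_max_right _ _) (le_max_right _ _)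

lemma asymAbs_le_abs (hw : 1 ≤ w) : asymAbs w t ≤ |t| := by
  refine max_le (le_abs_self t) ?_
  calc -t / w ≤ |t| / w := div_le_div_of_nonneg_right (neg_le_abs t) (by linarith)
    _ ≤ |t| := div_le_self (abs_nonneg t) hw

lemma eq_zero_of_asymAbs_nonpos (hw : 0 < w) (ht : asymAbs w t ≤ 0) : t = 0 := by
  have hle : t ≤ 0 := (le_max_left _ _).trans ht
  have hge : -t / w ≤ 0 := (le_max_right _ _).trans ht
  have : -t ≤ 0 * w := (div_le_iff₀ hw).mp hge
  linarith

@[simp]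
lemma asymAbs_zero : asymAbs w 0 = 0 := by simp [asymAbs]

lemma asymAbs_one (hw : 0 ≤ w) : asymAbs w 1 = 1 :=
  max_eq_left (by rw [neg_div]; linarith [one_div_nonneg.mpr hw])

lemma asymAbs_neg_one (hw : 0 ≤ w) : asymAbs w (-1) = 1 / w := by
  rw [asymAbs, neg_neg, max_eq_right]
  linarith [one_div_nonneg.mpr hw]

end asymAbs

/-- The asymmetric sup-norm `‖x|_∞ = ⨆ i, ‖x i|_{1/w i}` on `ℓ^∞(ι)`. -/
noncomputable def asymSupNorm {ι : Type*} (w : ι → ℝ) (x : lp (fun _ : ι => ℝ) ⊤) : ℝ :=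
  ⨆ i, asymAbs (w i) (x i)

section asymSupNorm

variable {ι : Type*} {w : ι → ℝ}

lemma asymAbs_le_norm (hw : ∀ i, 1 ≤ w i) (x : lp (fun _ : ι => ℝ) ⊤) (i : ι) :
    asymAbs (w i) (x i) ≤ ‖x‖ :=
  (asymAbs_le_abs (hw i)).trans (lp.norm_apply_le_norm ENNReal.top_ne_zero x i)

lemma bddAbove_range_asymAbs (hw : ∀ i, 1 ≤ w i) (x : lp (fun _ : ι => ℝ) ⊤) :
    BddAbove (Set.range fun i => asymAbs (w i) (x i)) :=
  ⟨‖x‖, by rintro _ ⟨i, rfl⟩; exact asymAbs_le_norm hw x i⟩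

lemma asymSupNorm_nonneg (hw : ∀ i, 0 ≤ w i) (x : lp (fun _ : ι => ℝ) ⊤) :
    0 ≤ asymSupNorm w x :=
  Real.iSup_nonneg fun i => asymAbs_nonneg (hw i)

lemma asymSupNorm_le_norm (hw : ∀ i, 1 ≤ w i) (x : lp (fun _ : ι => ℝ) ⊤) :
    asymSupNorm w x ≤ ‖x‖ :=
  Real.iSup_le (asymAbs_le_norm hw x) (norm_nonneg x)

lemma asymSupNorm_smul {c : ℝ} (hc : 0 ≤ c) (x : lp (fun _ : ι => ℝ) ⊤) :
    asymSupNorm w (c • x) = c * asymSupNorm w x := by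
  rw [asymSupNorm, asymSupNorm, Real.mul_iSup_of_nonneg hc]
  exact iSup_congr fun i => asymAbs_mul hc

lemma asymSupNorm_add_le (hw : ∀ i, 1 ≤ w i) (x y : lp (fun _ : ι => ℝ) ⊤) :
    asymSupNorm w (x + y) ≤ asymSupNorm w x + asymSupNorm w y := by
  have hw₀ i : 0 ≤ w i := zero_le_one.trans (hw i)
  refine Real.iSup_le (fun i => asymAbs_add_le.trans (add_le_add ?_ ?_))
    (add_nonneg (asymSupNorm_nonneg hw₀ x) (asymSupNorm_nonneg hw₀ y))
  · exact le_ciSup (bddAbove_range_asymAbs hw x) i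
  · exact le_ciSup (bddAbove_range_asymAbs hw y) i

@[simp]
lemma asymSupNorm_zero : asymSupNorm w 0 = 0 := by
  simp [asymSupNorm]

lemma asymSupNorm_eq_zero_iff (hw : ∀ i, 1 ≤ w i) {x : lp (fun _ : ι => ℝ) ⊤} :
    asymSupNorm w x = 0 ↔ x = 0 := by
  refine ⟨fun hx => ?_, fun hx => hx ▸ asymSupNorm_zero⟩
  ext i
  refine eq_zero_of_asymAbs_nonpos (zero_lt_one.trans_le (hw i)) ?_
  exact hx ▸ le_ciSup (bddAbove_range_asymAbs hw x) i

lemma asymSupNorm_single [DecidableEq ι] (hw : ∀ i, 1 ≤ w i) (i : ι) (a : ℝ) :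
    asymSupNorm w (lp.single ⊤ i a) = asymAbs (w i) a := by
  have hw₀ j : 0 ≤ w j := zero_le_one.trans (hw j)
  have hcoord j : asymAbs (w j) (lp.single (E := fun _ : ι => ℝ) ⊤ i a j) ≤ asymAbs (w i) a := by
    rcases eq_or_ne j i with rfl | hj
    · simp
    · simpa [lp.single_apply, Pi.single_apply, hj] using asymAbs_nonneg (hw₀ i)
  refine le_antisymm (Real.iSup_le hcoord (asymAbs_nonneg (hw₀ i))) ?_
  simpa [asymSupNorm] using le_ciSup (bddAbove_range_asymAbs hw (lp.single ⊤ i a)) i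

end asymSupNorm

/-- The index of symmetry `c(X) = inf {‖-x| : ‖x| = 1}` of an asymmetric norm. -/
noncomputable def indexOfSymmetry {E : Type*} [Neg E] (q : E → ℝ) : ℝ :=
  sInf {r : ℝ | ∃ x, q x = 1 ∧ r = q (-x)}

lemma indexOfSymmetry_eq_zero {E α : Type*} [Neg E] {q : E → ℝ} (hq : ∀ x, 0 ≤ q x)
    {l : Filter α} [l.NeBot] (u : α → E) (hu : ∀ a, q (u a) = 1)
    (hlim : Tendsto (fun a => q (-u a)) l (𝓝 0)) : indexOfSymmetry q = 0 := by
  have hbdd : BddBelow {r : ℝ | ∃ x, q x = 1 ∧ r = q (-x)} :=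
    ⟨0, by rintro _ ⟨x, -, rfl⟩; exact hq _⟩
  refine le_antisymm (ge_of_tendsto' hlim fun a => csInf_le hbdd ⟨u a, hu a, rfl⟩) ?_
  exact Real.sInf_nonneg (by rintro _ ⟨x, -, rfl⟩; exact hq _)

end AsymmetricLinfty

open AsymmetricLinfty

/-- On `ℓ^∞ = ℓ^∞(ℕ+)` (bounded real sequences indexed by the positive
integers), `‖x|_∞ := ⨆ n, max (x n) (-(x n)/n)` is an asymmetric norm with
`‖x|_∞ ≤ ‖x‖_∞`, the canonical unit vectors satisfy `‖e n|_∞ = 1` and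
`‖-e n|_∞ = 1/n`, and the index of symmetry `c(ℓ^∞, ‖·|_∞)` is zero. -/
theorem stmt_10 :
    ∀ q : lp (fun _ : ℕ+ => ℝ) ⊤ → ℝ,
      (q = fun x => ⨆ n : ℕ+, max (x n) (-(x n) / (n : ℝ))) →
      (∀ x, 0 ≤ q x) ∧
      (∀ c : ℝ, 0 ≤ c → ∀ x, q (c • x) = c * q x) ∧
      (∀ x y, q (x + y) ≤ q x + q y) ∧
      (∀ x, (q x = 0 ∧ q (-x) = 0) ↔ x = 0) ∧
      (∀ x, q x ≤ ‖x‖) ∧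
      (∀ n : ℕ+, q (lp.single ⊤ n (1 : ℝ)) = 1 ∧
        q (-(lp.single ⊤ n (1 : ℝ))) = 1 / (n : ℝ)) ∧
      sInf {r : ℝ | ∃ x, q x = 1 ∧ r = q (-x)} = 0 := by
  intro q hq
  set w : ℕ+ → ℝ := fun n => n
  obtain rfl : q = asymSupNorm w := hq
  have hw (n : ℕ+) : 1 ≤ w n := Nat.one_le_cast.mpr n.pos
  have hw₀ (n : ℕ+) : 0 ≤ w n := zero_le_one.trans (hw n)
  have hunit (n : ℕ+) : asymSupNorm w (lp.single ⊤ n 1) = 1 ∧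
      asymSupNorm w (-lp.single ⊤ n 1) = 1 / w n := by
    rw [← lp.single_neg, asymSupNorm_single hw, asymSupNorm_single hw,
      asymAbs_one (hw₀ n), asymAbs_neg_one (hw₀ n)]
    exact ⟨rfl, rfl⟩
  have hlim : Tendsto (fun k : ℕ => asymSupNorm w (-lp.single ⊤ k.succPNat 1)) atTop (𝓝 0) := by
    simpa [hunit, w] using tendsto_one_div_add_atTop_nhds_zero_nat (𝕜 := ℝ)
  refine ⟨asymSupNorm_nonneg hw₀, fun c hc => asymSupNorm_smul hc, asymSupNorm_add_le hw,
    fun x => ?_, asymSupNorm_le_norm hw, hunit,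
    indexOfSymmetry_eq_zero (asymSupNorm_nonneg hw₀) _ (fun k => (hunit _).1) hlim⟩
  rw [asymSupNorm_eq_zero_iff hw, asymSupNorm_eq_zero_iff hw, neg_eq_zero, and_self]
end

section
/- The space ℓ^∞ of bounded real sequences indexed by the positive integers, equipped with the topology induced by the asymmetric norm ‖x|_∞ := sup_{n ≥ 1} max(x_n, -x_n/n), is not a Baire space. -/
/-!
The sets `U_k = {x | ∃ n, x n < -k}` are open, and their intersection is empty since elements
of `ℓ^∞` are bounded. Each `U_k` is nevertheless dense: pushing the `n`-th coordinate of `x`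
down by `c` costs only `c / n` in the asymmetric norm, so `x - c • e_n → x` as `n → ∞`, and for
`c` large these points lie in `U_k`.
-/

open TopologicalSpace Set Filter Topology

local notation "ℓ∞" => lp (fun _ : ℕ+ => ℝ) ⊤

namespace AsymLinfty

lemma max_le_abs_of_one_le (a : ℝ) {t : ℝ} (ht : 1 ≤ t) : max a (-a / t) ≤ |a| :=
  max_le (le_abs_self a) <| calc
    -a / t ≤ |a| / t := div_le_div_of_nonneg_right (neg_le_abs a) (by linarith)
    _ ≤ |a| := div_le_self (abs_nonneg a) ht

noncomputable def asymNorm (z : ℓ∞) : ℝ := ⨆ n : ℕ+, max (z n) (-(z n) / n)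

lemma bddAbove_range_asymNorm (z : ℓ∞) :
    BddAbove (range fun n : ℕ+ => max (z n) (-(z n) / n)) := by
  obtain ⟨C, hC⟩ := memℓp_infty_iff.mp (lp.memℓp z)
  refine ⟨C, forall_mem_range.mpr fun n => ?_⟩
  exact (max_le_abs_of_one_le _ (by exact_mod_cast n.pos)).trans (hC ⟨n, rfl⟩)

lemma le_asymNorm (z : ℓ∞) (n : ℕ+) : z n ≤ asymNorm z :=
  (le_max_left _ _).trans (le_ciSup (bddAbove_range_asymNorm z) n)

lemma neg_div_le_asymNorm (z : ℓ∞) (n : ℕ+) : -(z n) / n ≤ asymNorm z :=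
  (le_max_right _ _).trans (le_ciSup (bddAbove_range_asymNorm z) n)

@[simp] lemma asymNorm_zero : asymNorm 0 = 0 := by
  simp [asymNorm]

lemma asymNorm_add_le (a b : ℓ∞) : asymNorm (a + b) ≤ asymNorm a + asymNorm b := by
  refine ciSup_le fun n => ?_
  rw [lp.coeFn_add, Pi.add_apply, neg_add, add_div]
  exact max_le (add_le_add (le_asymNorm a n) (le_asymNorm b n))
    (add_le_add (neg_div_le_asymNorm a n) (neg_div_le_asymNorm b n))

lemma asymNorm_sub_le (x y z : ℓ∞) : asymNorm (x - z) ≤ asymNorm (x - y) + asymNorm (y - z) := by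
  simpa using asymNorm_add_le (x - y) (y - z)

lemma asymNorm_neg_single_le {c : ℝ} (hc : 0 ≤ c) (n : ℕ+) :
    asymNorm (-lp.single ⊤ n c) ≤ c / n := by
  refine ciSup_le fun p => ?_
  rw [lp.coeFn_neg, Pi.neg_apply]
  rcases eq_or_ne p n with rfl | hp
  · rw [lp.single_apply_self, neg_neg]
    exact max_le ((neg_nonpos.mpr hc).trans (by positivity)) le_rfl
  · rw [lp.single_apply_ne _ _ _ hp]
    simp only [neg_zero, zero_div, max_self]
    positivity

def asymBall (x : ℓ∞) (r : ℝ) : Set ℓ∞ := {y | asymNorm (y - x) < r}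

abbrev asymTopology : TopologicalSpace ℓ∞ :=
  generateFrom {s | ∃ x : ℓ∞, ∃ r : ℝ, 0 < r ∧ s = asymBall x r}

lemma isOpen_asymBall (x : ℓ∞) {r : ℝ} (hr : 0 < r) : IsOpen[asymTopology] (asymBall x r) :=
  isOpen_generateFrom_of_mem ⟨x, r, hr, rfl⟩

lemma mem_asymBall_self (x : ℓ∞) {r : ℝ} (hr : 0 < r) : x ∈ asymBall x r := by
  simpa [asymBall] using hr

lemma tendsto_sub_single (x : ℓ∞) {c : ℝ} (hc : 0 ≤ c) :
    Tendsto (fun n : ℕ+ => x - lp.single ⊤ n c) atTop (@nhds ℓ∞ asymTopology x) := by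
  rw [asymTopology, tendsto_nhds_generateFrom_iff]
  rintro _ ⟨z, r, -, rfl⟩ (hx : asymNorm (x - z) < r)
  have hlim : Tendsto (fun n : ℕ+ => c / (n : ℝ)) atTop (𝓝 0) :=
    (tendsto_const_div_atTop_nhds_zero_nat c).comp tendsto_PNat_val_atTop_atTop
  filter_upwards [hlim.eventually (gt_mem_nhds (sub_pos.mpr hx))] with n hn
  calc asymNorm (x - lp.single ⊤ n c - z)
      ≤ asymNorm (x - lp.single ⊤ n c - x) + asymNorm (x - z) := asymNorm_sub_le _ x _
    _ ≤ c / n + asymNorm (x - z) := by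
        rw [sub_sub_cancel_left]; gcongr; exact asymNorm_neg_single_le hc n
    _ < r := by linarith

lemma isOpen_exists_apply_lt (a : ℝ) : IsOpen[asymTopology] {x : ℓ∞ | ∃ n, x n < a} := by
  refine @isOpen_iff_forall_mem_open _ asymTopology _ |>.mpr ?_
  rintro x ⟨n, hn⟩
  refine ⟨asymBall x (a - x n), fun y hy => ⟨n, ?_⟩, isOpen_asymBall x (sub_pos.mpr hn),
    mem_asymBall_self x (sub_pos.mpr hn)⟩
  have hle := le_asymNorm (y - x) n
  rw [lp.coeFn_sub, Pi.sub_apply] at hle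
  linarith [show asymNorm (y - x) < a - x n from hy]

lemma dense_exists_apply_lt (a : ℝ) : @Dense ℓ∞ asymTopology {x | ∃ n, x n < a} := by
  intro x
  refine @mem_closure_of_tendsto _ asymTopology _ _ _ _ _ _
    (tendsto_sub_single x (c := ‖x‖ + |a| + 1) (by positivity))
    (Eventually.of_forall fun n => ⟨n, ?_⟩)
  rw [lp.coeFn_sub, Pi.sub_apply, lp.single_apply_self]
  have := (le_abs_self _).trans (lp.norm_apply_le_norm ENNReal.top_ne_zero x n)
  linarith [neg_abs_le a]

lemma iInter_exists_apply_lt_neg_eq_empty : ⋂ k : ℕ, {x : ℓ∞ | ∃ n, x n < -k} = ∅ := by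
  refine eq_empty_of_forall_notMem fun x hx => ?_
  obtain ⟨n, hn⟩ := mem_iInter.mp hx ⌈‖x‖⌉₊
  have := (neg_le_abs _).trans (lp.norm_apply_le_norm ENNReal.top_ne_zero x n)
  linarith [Nat.le_ceil ‖x‖]

end AsymLinfty

open AsymLinfty in
/-- The space `ℓ^∞` of bounded real sequences indexed by the positive
integers, equipped with the topology induced by the asymmetric norm
`‖x|_∞ := ⨆ n, max (x n) (-(x n)/n)`, is not a Baire space. -/
theorem stmt_11 :
    ¬ @BaireSpace (lp (fun _ : ℕ+ => ℝ) ⊤)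
      (TopologicalSpace.generateFrom
        {s : Set (lp (fun _ : ℕ+ => ℝ) ⊤) | ∃ x : lp (fun _ : ℕ+ => ℝ) ⊤, ∃ r : ℝ,
          0 < r ∧ s = {y : lp (fun _ : ℕ+ => ℝ) ⊤ |
            (⨆ n : ℕ+, max ((y - x) n) (-((y - x) n) / (n : ℝ))) < r}}) := by
  intro hBaire
  have hdense := @dense_iInter_of_isOpen _ _ asymTopology hBaire _ _
    (fun k : ℕ => isOpen_exists_apply_lt (-k)) (fun k => dense_exists_apply_lt (-k))
  rw [iInter_exists_apply_lt_neg_eq_empty] at hdense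
  exact (@Dense.nonempty _ asymTopology _ ⟨0⟩ hdense).ne_empty rfl
end

section
/- Let (X, d) be a quasi-hemi-metric space and let f : X → ℝ be a function that is semi-Lipschitz with respect to the conjugate quasi-hemi-metric, i.e. there exists L ≥ 0 such that f(x) - f(y) ≤ L·d(y,x) for all x, y ∈ X, but whose negative is not semi-Lipschitz, i.e. for every C ≥ 0 there exist x, y ∈ X with f(x) - f(y) > C·d(x,y). Then the index of symmetry of (X,d) is zero: for every ε > 0 there exist x, y ∈ X with d(y,x) > 0 and d(x,y) < ε·d(y,x). -/
/-! Testing the non-semi-Lipschitz property of `-f` with the constant `L / ε` produces a pair with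
`(L / ε) d(x,y) < f x - f y ≤ L d(y,x)`; hence `d(y,x) > 0` and `d(x,y) < ε d(y,x)`. -/

lemma pos_and_lt_mul_of_div_mul_lt_mul {L ε a b : ℝ} (hL : 0 ≤ L) (hε : 0 < ε) (ha : 0 ≤ a)
    (h : L / ε * a < L * b) : 0 < b ∧ a < ε * b := by
  have hLb : 0 < L * b := (by positivity : 0 ≤ L / ε * a).trans_lt h
  have hLpos : 0 < L := lt_of_le_of_ne hL (by rintro rfl; simp at hLb)
  have hb : 0 < b := pos_of_mul_pos_right hLb hL
  refine ⟨hb, ?_⟩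
  rw [div_mul_eq_mul_div, div_lt_iff₀ hε, mul_assoc] at h
  linarith [lt_of_mul_lt_mul_left h hL, mul_comm b ε]

theorem stmt_12_general {X : Type*} (d : X → X → ℝ)
    (hd0 : ∀ x y, 0 ≤ d x y)
    (f : X → ℝ)
    (hsl : ∃ L : ℝ, 0 ≤ L ∧ ∀ x y : X, f x - f y ≤ L * d y x)
    (hnsl : ∀ C : ℝ, 0 ≤ C → ∃ x y : X, C * d x y < f x - f y) :
    ∀ ε : ℝ, 0 < ε → ∃ x y : X, 0 < d y x ∧ d x y < ε * d y x := by
  intro ε hε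
  obtain ⟨L, hL0, hL⟩ := hsl
  obtain ⟨x, y, hxy⟩ := hnsl (L / ε) (by positivity)
  exact ⟨x, y, pos_and_lt_mul_of_div_mul_lt_mul hL0 hε (hd0 x y) (hxy.trans_le (hL x y))⟩

/-- Let `(X, d)` be a quasi-hemi-metric space and `f : X → ℝ` be
semi-Lipschitz with respect to the conjugate quasi-hemi-metric
(`f x - f y ≤ L * d y x` for some `L ≥ 0`), while `-f` is not semi-Lipschitz
(for every `C ≥ 0` there are `x, y` with `f x - f y > C * d x y`). Then the
index of symmetry of `(X, d)` is zero: for every `ε > 0` there exist `x, y`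
with `d y x > 0` and `d x y < ε * d y x`. -/
theorem stmt_12 {X : Type*} (d : X → X → ℝ)
    (hd0 : ∀ x y, 0 ≤ d x y)
    (htri : ∀ x y z, d x y ≤ d x z + d z y)
    (hsep : ∀ x y, (d x y = 0 ∧ d y x = 0) ↔ x = y)
    (f : X → ℝ)
    (hsl : ∃ L : ℝ, 0 ≤ L ∧ ∀ x y : X, f x - f y ≤ L * d y x)
    (hnsl : ∀ C : ℝ, 0 ≤ C → ∃ x y : X, C * d x y < f x - f y) :
    ∀ ε : ℝ, 0 < ε → ∃ x y : X, 0 < d y x ∧ d x y < ε * d y x :=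
  stmt_12_general d hd0 f hsl hnsl
end
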